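/- Let H = Δ + λV on ℓ²(ℤ^d_L) (a finite torus) with V diagonal with entries g_w, R = (H - z)^{-1}, and A a bounded operator. Then for any w, x, y: ∂_{g_w} (R A R*)_{xy} = −λ [ R_{xw} (R A R*)_{wy} + (R A R*)_{xw} (R*)_{wy} ]. Consequently ∑_w |∂_{g_w}(RAR*)_{xy}|² ≤ 4λ² ‖R‖²_{1→4} ‖R‖²_{1→2} ‖A‖²_{2→2} ‖R‖²_{2→4}. -/

import Mathlib

open Matrix
open scoped Classical

noncomputable section

/-- The nearest-neighbor Laplacian on the finite torus `ℤ^d_L`: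
`Δ_{a b} = 1` iff `a` and `b` differ by a standard unit vector. -/
noncomputable def torusLap (d L : ℕ) [NeZero L] :
    Matrix (Fin d → ZMod L) (Fin d → ZMod L) ℂ :=
  Matrix.of fun a b =>
    if ∃ j : Fin d, a = b + Pi.single j 1 ∨ b = a + Pi.single j 1 then 1 else 0

/-- The `ℓ^p → ℓ^q` operator norm of a matrix. -/
noncomputable def opNormPQ {ι : Type*} [Fintype ι] (p q : ℝ) (M : Matrix ι ι ℂ) : ℝ :=
  sInf {C : ℝ | 0 ≤ C ∧ ∀ v : ι → ℂ,
    (∑ y, ‖M.mulVec v y‖ ^ q) ^ q⁻¹ ≤ C * (∑ x, ‖v x‖ ^ p) ^ p⁻¹}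

/-! Since `H = Δ + λV` is Hermitian and `Im z ≠ 0`, `H - z` is invertible, and differentiating
`R A R*` in `g_w` with `∂R = -λ R E_ww R` gives the formula. For the bound, `(a + b)² ≤ 2(a² + b²)`
and Cauchy–Schwarz in `w` reduce everything to `ℓ⁴` norms of rows and columns of `R` and of
`T = R A R*`. As `R` is symmetric, these are columns of `R`, bounded by `‖R‖_{1→4}`, and columns of
`R B R*` with `B = A` or `B = A*`, bounded by `‖R‖_{2→4} ‖B‖_{2→2} ‖R‖_{1→2}`; finally
`‖A*‖_{2→2} = ‖A‖_{2→2}`. Throughout, `opNormPQ p q M` is read as the operator norm of `M` from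
`PiLp p` to `PiLp q`. -/

open WithLp ENNReal

instance fact_one_le_four_ennreal : Fact (1 ≤ (4 : ℝ≥0∞)) := ⟨by norm_num⟩

lemma norm_mul_add_mul_sq_le {α : Type*} [SeminormedRing α] (a b c e : α) :
    ‖a * b + c * e‖ ^ 2 ≤ 2 * (‖a‖ ^ 2 * ‖b‖ ^ 2 + ‖c‖ ^ 2 * ‖e‖ ^ 2) :=
  calc ‖a * b + c * e‖ ^ 2 ≤ (‖a‖ * ‖b‖ + ‖c‖ * ‖e‖) ^ 2 := by
        gcongr
        exact (norm_add_le _ _).trans (add_le_add (norm_mul_le _ _) (norm_mul_le _ _))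
    _ ≤ _ := by rw [← mul_pow, ← mul_pow]; exact add_sq_le

section LpNorms

variable {ι : Type*} [Fintype ι]

lemma opNormPQ_nonneg (p q : ℝ) (M : Matrix ι ι ℂ) : 0 ≤ opNormPQ p q M :=
  Real.sInf_nonneg fun _ hC => hC.1

lemma norm_toLp_congr {p : ℝ≥0∞} (hp : 0 < p.toReal) {u v : ι → ℂ}
    (h : ∀ i, ‖u i‖ = ‖v i‖) : ‖toLp p u‖ = ‖toLp p v‖ := by
  simp only [PiLp.norm_eq_sum hp, h]

lemma norm_toLp_four_pow (v : ι → ℂ) : ‖toLp 4 v‖ ^ 4 = ∑ i, ‖v i‖ ^ 4 := by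
  have hS : 0 ≤ ∑ i, ‖v i‖ ^ (4 : ℝ) := by positivity
  rw [PiLp.norm_eq_sum (by norm_num), ← Real.rpow_natCast]
  simp only [ENNReal.toReal_ofNat]
  rw [← Real.rpow_mul hS]
  norm_num

lemma sum_norm_sq_mul_norm_sq_le (a b : ι → ℂ) :
    ∑ i, ‖a i‖ ^ 2 * ‖b i‖ ^ 2 ≤ ‖toLp 4 a‖ ^ 2 * ‖toLp 4 b‖ ^ 2 := by
  have hcs := Finset.sum_mul_sq_le_sq_mul_sq Finset.univ (fun i => ‖a i‖ ^ 2) (fun i => ‖b i‖ ^ 2)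
  simp only [← pow_mul, Nat.reduceMul, ← norm_toLp_four_pow] at hcs
  refine (pow_le_pow_iff_left₀ (by positivity) (by positivity) two_ne_zero).1 ?_
  linarith

variable [DecidableEq ι]

lemma opNormPQ_toReal_eq_norm {p q : ℝ≥0∞} [Fact (1 ≤ p)] [Fact (1 ≤ q)] (hp : p ≠ ∞)
    (hq : q ≠ ∞) (M : Matrix ι ι ℂ) :
    opNormPQ p.toReal q.toReal M = ‖LinearMap.toContinuousLinearMap (M.toLpLin p q)‖ := by
  have hp0 : 0 < p.toReal := ENNReal.toReal_pos (one_pos.trans_le Fact.out).ne' hp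
  have hq0 : 0 < q.toReal := ENNReal.toReal_pos (one_pos.trans_le Fact.out).ne' hq
  rw [ContinuousLinearMap.norm_def, opNormPQ]
  congr! 3 with C
  refine and_congr_right fun _ => ⟨fun h x => ?_, fun h v => ?_⟩
  · simpa [PiLp.norm_eq_sum hp0, PiLp.norm_eq_sum hq0, one_div] using h (ofLp x)
  · simpa [PiLp.norm_eq_sum hp0, PiLp.norm_eq_sum hq0, one_div] using h (toLp p v)

lemma norm_toLp_mulVec_le_opNormPQ {p q : ℝ≥0∞} [Fact (1 ≤ p)] [Fact (1 ≤ q)] (hp : p ≠ ∞)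
    (hq : q ≠ ∞) (M : Matrix ι ι ℂ) (v : ι → ℂ) :
    ‖toLp q (M *ᵥ v)‖ ≤ opNormPQ p.toReal q.toReal M * ‖toLp p v‖ := by
  rw [opNormPQ_toReal_eq_norm hp hq]
  exact (LinearMap.toContinuousLinearMap (M.toLpLin p q)).le_opNorm (toLp p v)

lemma norm_toLp_col_le_opNormPQ {q : ℝ≥0∞} [Fact (1 ≤ q)] (hq : q ≠ ∞) (M : Matrix ι ι ℂ)
    (j : ι) : ‖toLp q (fun i => M i j)‖ ≤ opNormPQ 1 q.toReal M := by
  have h := norm_toLp_mulVec_le_opNormPQ (p := 1) one_ne_top hq M (Pi.single j 1)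
  simp only [mulVec_single_one, PiLp.toLp_single, PiLp.norm_single, norm_one, mul_one,
    ENNReal.toReal_one] at h
  exact h

lemma opNormPQ_two_two_conjTranspose (M : Matrix ι ι ℂ) :
    opNormPQ 2 2 Mᴴ = opNormPQ 2 2 M := by
  have h_euclid (N : Matrix ι ι ℂ) : opNormPQ 2 2 N = ‖toEuclideanCLM (n := ι) (𝕜 := ℂ) N‖ := by
    have : LinearMap.toContinuousLinearMap (N.toLpLin 2 2) = toEuclideanCLM (n := ι) (𝕜 := ℂ) N :=
      rfl
    rw [← this]
    simpa using opNormPQ_toReal_eq_norm (p := 2) (q := 2) ofNat_ne_top ofNat_ne_top N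
  rw [h_euclid, h_euclid, ← star_eq_conjTranspose, map_star, ContinuousLinearMap.star_eq_adjoint,
    LinearIsometryEquiv.norm_map]

lemma norm_toLp_col_mul_mul_conjTranspose_le {R : Matrix ι ι ℂ} (hR : Rᵀ = R)
    (B : Matrix ι ι ℂ) (y : ι) :
    ‖toLp 4 (fun w => (R * B * Rᴴ) w y)‖ ≤ opNormPQ 2 4 R * opNormPQ 2 2 B * opNormPQ 1 2 R := by
  have h_col : (fun w => (R * B * Rᴴ) w y) = R *ᵥ (B *ᵥ fun i => Rᴴ i y) := by
    change (R * B * Rᴴ).col y = R *ᵥ (B *ᵥ Rᴴ.col y)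
    rw [← mulVec_single_one, ← mulVec_single_one, mulVec_mulVec, mulVec_mulVec]
  have hRH_col : ‖toLp 2 (fun i => Rᴴ i y)‖ ≤ opNormPQ 1 2 R := by
    rw [norm_toLp_congr (by norm_num) (v := fun i => R i y) fun i => by
      rw [conjTranspose_apply, norm_star, ← transpose_apply R, hR]]
    simpa using norm_toLp_col_le_opNormPQ (q := 2) ofNat_ne_top R y
  have hR_24 := norm_toLp_mulVec_le_opNormPQ (p := 2) (q := 4) ofNat_ne_top ofNat_ne_top R
    (B *ᵥ fun i => Rᴴ i y)
  have hB_22 := norm_toLp_mulVec_le_opNormPQ (p := 2) (q := 2) ofNat_ne_top ofNat_ne_top B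
    (fun i => Rᴴ i y)
  simp only [ENNReal.toReal_ofNat] at hR_24 hB_22
  rw [h_col, mul_assoc]
  refine hR_24.trans (mul_le_mul_of_nonneg_left (hB_22.trans ?_) (opNormPQ_nonneg _ _ _))
  exact mul_le_mul_of_nonneg_left hRH_col (opNormPQ_nonneg _ _ _)

theorem sum_norm_sq_sandwich_deriv_le (lam : ℝ) {R : Matrix ι ι ℂ} (hR : Rᵀ = R)
    (A : Matrix ι ι ℂ) (x y : ι) :
    ∑ w, ‖-(lam : ℂ) * (R x w * (R * A * Rᴴ) w y + (R * A * Rᴴ) x w * Rᴴ w y)‖ ^ 2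
      ≤ 4 * lam ^ 2 * opNormPQ 1 4 R ^ 2 * opNormPQ 1 2 R ^ 2
          * opNormPQ 2 2 A ^ 2 * opNormPQ 2 4 R ^ 2 := by
  set T := R * A * Rᴴ
  set K := opNormPQ 1 4 R
  set P := opNormPQ 2 4 R * opNormPQ 2 2 A * opNormPQ 1 2 R
  have hR_symm (a b : ι) : R a b = R b a := by rw [← transpose_apply R b a, hR]
  have hR_row : ‖toLp 4 (fun w => R x w)‖ ≤ K := by
    simpa only [hR_symm x, ENNReal.toReal_ofNat] using
      norm_toLp_col_le_opNormPQ (q := 4) ofNat_ne_top R x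
  have hRH_col : ‖toLp 4 (fun w => Rᴴ w y)‖ ≤ K := by
    rw [norm_toLp_congr (by norm_num) (v := fun w => R w y) fun w => by
      rw [conjTranspose_apply, norm_star, hR_symm]]
    simpa using norm_toLp_col_le_opNormPQ (q := 4) ofNat_ne_top R y
  have hT_col : ‖toLp 4 (fun w => T w y)‖ ≤ P := norm_toLp_col_mul_mul_conjTranspose_le hR A y
  have hT_row : ‖toLp 4 (fun w => T x w)‖ ≤ P := by
    have hT : T = (R * Aᴴ * Rᴴ)ᴴ := by simp [T, Matrix.mul_assoc]
    rw [norm_toLp_congr (by norm_num) (v := fun w => (R * Aᴴ * Rᴴ) w x) fun w => by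
      rw [hT, conjTranspose_apply, norm_star]]
    simpa [opNormPQ_two_two_conjTranspose] using norm_toLp_col_mul_mul_conjTranspose_le hR Aᴴ x
  calc ∑ w, ‖-(lam : ℂ) * (R x w * T w y + T x w * Rᴴ w y)‖ ^ 2
      ≤ ∑ w, 2 * lam ^ 2 * (‖R x w‖ ^ 2 * ‖T w y‖ ^ 2 + ‖T x w‖ ^ 2 * ‖Rᴴ w y‖ ^ 2) := by
        refine Finset.sum_le_sum fun w _ => ?_
        rw [norm_mul, norm_neg, Complex.norm_real, Real.norm_eq_abs, mul_pow, sq_abs,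
          mul_comm 2 (lam ^ 2), mul_assoc]
        exact mul_le_mul_of_nonneg_left (norm_mul_add_mul_sq_le _ _ _ _) (sq_nonneg lam)
    _ = 2 * lam ^ 2 * (∑ w, ‖R x w‖ ^ 2 * ‖T w y‖ ^ 2 + ∑ w, ‖T x w‖ ^ 2 * ‖Rᴴ w y‖ ^ 2) := by
        rw [← Finset.mul_sum, Finset.sum_add_distrib]
    _ ≤ 2 * lam ^ 2 * (K ^ 2 * P ^ 2 + P ^ 2 * K ^ 2) := by
        gcongr
        · exact (sum_norm_sq_mul_norm_sq_le _ _).trans (by gcongr)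
        · exact (sum_norm_sq_mul_norm_sq_le _ _).trans (by gcongr)
    _ = _ := by ring

end LpNorms

section Derivative

variable {ι : Type*} [Fintype ι] [DecidableEq ι]

lemma mul_single_one_mul_apply {α : Type*} [Semiring α] (X Y : Matrix ι ι α) (w x y : ι) :
    (X * Matrix.single w w (1 : α) * Y) x y = X x w * Y w y := by
  rw [Matrix.mul_assoc, mul_apply, Fintype.sum_eq_single w fun k hk => by
    rw [single_mul_apply_of_ne 1 w w k y hk Y, mul_zero], single_mul_apply_same, one_mul]

-- Any norm would do; the `ℓ∞` operator norm makes `Matrix ι ι ℂ` a normed `ℝ`-algebra, which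
-- differentiating the inverse requires.
attribute [local instance] Matrix.linftyOpNormedRing Matrix.linftyOpNormedAlgebra

variable {F : ℝ → Matrix ι ι ℂ} {F' : Matrix ι ι ℂ} {t : ℝ}

theorem HasDerivAt.matrix_inv (hF : HasDerivAt F F' t) (hFt : IsUnit (F t)) :
    HasDerivAt (fun s => (F s)⁻¹) (-((F t)⁻¹ * F' * (F t)⁻¹)) t := by
  obtain ⟨u, hu⟩ := hFt
  have hinv := hasFDerivAt_ringInverse (𝕜 := ℝ) u
  rw [hu] at hinv
  have h_comp := hinv.comp_hasDerivAt t hF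
  simp only [Function.comp_def, ← nonsing_inv_eq_ringInverse] at h_comp
  refine h_comp.congr_deriv ?_
  simp [← hu, coe_units_inv]

theorem HasDerivAt.mul_mul_conjTranspose (hF : HasDerivAt F F' t) (A : Matrix ι ι ℂ) :
    HasDerivAt (fun s => F s * A * (F s)ᴴ) (F' * A * (F t)ᴴ + F t * A * F'ᴴ) t :=
  (hF.mul_const A).mul <|
    (LinearMap.toContinuousLinearMap (starLinearEquiv ℝ).toLinearMap).hasFDerivAt.comp_hasDerivAt
      t hF

theorem HasDerivAt.matrix_apply (hF : HasDerivAt F F' t) (i j : ι) :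
    HasDerivAt (fun s => F s i j) (F' i j) t :=
  (LinearMap.toContinuousLinearMap (entryLinearMap ℝ ℂ i j)).hasFDerivAt.comp_hasDerivAt t hF

theorem HasDerivAt.inv_mul_mul_conjTranspose_inv_apply {lam : ℝ} {w : ι}
    (hF : HasDerivAt F ((lam : ℂ) • single w w 1) t) (hFt : IsUnit (F t)) (A : Matrix ι ι ℂ)
    (x y : ι) :
    HasDerivAt (fun s => ((F s)⁻¹ * A * ((F s)⁻¹)ᴴ) x y)
      (-(lam : ℂ) * ((F t)⁻¹ x w * ((F t)⁻¹ * A * ((F t)⁻¹)ᴴ) w y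
        + ((F t)⁻¹ * A * ((F t)⁻¹)ᴴ) x w * ((F t)⁻¹)ᴴ w y)) t := by
  refine (((hF.matrix_inv hFt).mul_mul_conjTranspose A).matrix_apply x y).congr_deriv ?_
  set R := (F t)⁻¹
  set E := Matrix.single w w (1 : ℂ)
  have h_left : -(R * (lam : ℂ) • E * R) * A * Rᴴ = -(lam : ℂ) • (R * E * (R * A * Rᴴ)) := by
    simp only [Matrix.mul_smul, Matrix.smul_mul, Matrix.neg_mul, neg_smul, Matrix.mul_assoc]
  have h_right : R * A * (-(R * (lam : ℂ) • E * R))ᴴ = -(lam : ℂ) • (R * A * Rᴴ * E * Rᴴ) := by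
    simp only [E, conjTranspose_neg, conjTranspose_mul, conjTranspose_smul, conjTranspose_single,
      star_one, Complex.star_def, Complex.conj_ofReal, Matrix.mul_smul, Matrix.smul_mul,
      Matrix.mul_neg, neg_smul, Matrix.mul_assoc]
  rw [Matrix.add_apply, h_left, h_right, Matrix.smul_apply, Matrix.smul_apply,
    mul_single_one_mul_apply, mul_single_one_mul_apply, smul_eq_mul, smul_eq_mul, mul_add]

theorem hasDerivAt_diagonal_update (g : ι → ℝ) (w : ι) :
    HasDerivAt (fun s : ℝ => diagonal fun i => ((Function.update g w s i : ℝ) : ℂ))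
      (single w w 1) (g w) := by
  have h_affine : (fun s : ℝ => diagonal fun i => ((Function.update g w s i : ℝ) : ℂ)) =
      fun s => diagonal (fun i => ((g i : ℝ) : ℂ)) + (s - g w) • single w w 1 := by
    ext s a b
    by_cases hab : a = b
    · subst hab
      by_cases haw : a = w
      · subst haw; simp
      · simp [haw, Ne.symm haw]
    · simp only [diagonal_apply_ne _ hab, Matrix.add_apply, Matrix.smul_apply, single_apply]
      rw [if_neg fun h => hab (h.1.symm.trans h.2), smul_zero, zero_add]
  rw [h_affine]
  exact ((((hasDerivAt_id (g w)).sub_const (g w)).smul_const (single w w (1 : ℂ))).const_add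
    (diagonal fun i => ((g i : ℝ) : ℂ))).congr_deriv (one_smul _ _)

theorem hasDerivAt_add_smul_diagonal_update_sub (M N : Matrix ι ι ℂ) (c : ℂ) (g : ι → ℝ)
    (w : ι) :
    HasDerivAt (fun t : ℝ => M + c • diagonal (fun i => ((Function.update g w t i : ℝ) : ℂ)) - N)
      (c • single w w 1) (g w) :=
  (((hasDerivAt_diagonal_update g w).const_smul c).const_add M).sub_const N

end Derivative

section Hermitian

variable {ι : Type*} [DecidableEq ι]

theorem Matrix.IsHermitian.add_ofReal_smul_diagonal {M : Matrix ι ι ℂ} (hM : M.IsHermitian)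
    (lam : ℝ) (g : ι → ℝ) : (M + (lam : ℂ) • diagonal fun i => ((g i : ℝ) : ℂ)).IsHermitian :=
  hM.add ((isHermitian_diagonal_of_self_adjoint _ (funext fun _ => Complex.conj_ofReal _)).smul
    (Complex.conj_ofReal _))

theorem Matrix.IsHermitian.isUnit_sub_smul_one [Fintype ι] {M : Matrix ι ι ℂ}
    (hM : M.IsHermitian) {z : ℂ} (hz : z.im ≠ 0) : IsUnit (M - z • 1) := by
  have hz_spec : z ∉ spectrum ℂ M := by
    rw [hM.spectrum_eq_image_range]
    rintro ⟨_, ⟨i, rfl⟩, rfl⟩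
    exact hz (by simp)
  rw [spectrum.notMem_iff, Algebra.algebraMap_eq_smul_one] at hz_spec
  simpa using hz_spec.neg

end Hermitian

lemma torusLap_transpose (d L : ℕ) [NeZero L] : (torusLap d L)ᵀ = torusLap d L := by
  ext a b
  simp only [transpose_apply, torusLap, of_apply]
  exact if_congr (exists_congr fun j => or_comm) rfl rfl

lemma torusLap_isHermitian (d L : ℕ) [NeZero L] : (torusLap d L).IsHermitian := by
  ext a b
  rw [conjTranspose_apply, ← transpose_apply (torusLap d L), torusLap_transpose]
  simp only [torusLap, of_apply]
  split_ifs <;> simp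

theorem RAR_deriv_and_gradient_bound_general (d L : ℕ) [NeZero L]
    (lam : ℝ) (g : (Fin d → ZMod L) → ℝ) (z : ℂ) (hz : 0 < z.im)
    (A : Matrix (Fin d → ZMod L) (Fin d → ZMod L) ℂ) :
    let H : ((Fin d → ZMod L) → ℝ) → Matrix (Fin d → ZMod L) (Fin d → ZMod L) ℂ :=
      fun gg => torusLap d L + (lam : ℂ) • Matrix.diagonal (fun i => ((gg i : ℝ) : ℂ))
        - z • (1 : Matrix (Fin d → ZMod L) (Fin d → ZMod L) ℂ)
    let R := (H g)⁻¹
    let T := R * A * Rᴴ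
    (∀ w x y : Fin d → ZMod L,
      HasDerivAt
        (fun t : ℝ => (((H (Function.update g w t))⁻¹) * A * ((H (Function.update g w t))⁻¹)ᴴ) x y)
        (-(lam : ℂ) * (R x w * T w y + T x w * Rᴴ w y)) (g w)) ∧
    (∀ x y : Fin d → ZMod L,
      ∑ w : Fin d → ZMod L, ‖-(lam : ℂ) * (R x w * T w y + T x w * Rᴴ w y)‖ ^ 2
        ≤ 4 * lam ^ 2 * opNormPQ 1 4 R ^ 2 * opNormPQ 1 2 R ^ 2
            * opNormPQ 2 2 A ^ 2 * opNormPQ 2 4 R ^ 2) := by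
  intro H R T
  have hR_symm : Rᵀ = R := by
    simp [R, H, transpose_nonsing_inv, torusLap_transpose]
  refine ⟨fun w x y => ?_, fun x y => sum_norm_sq_sandwich_deriv_le lam hR_symm A x y⟩
  have hH_unit : IsUnit (H (Function.update g w (g w))) := by
    rw [Function.update_eq_self]
    exact ((torusLap_isHermitian d L).add_ofReal_smul_diagonal lam g).isUnit_sub_smul_one hz.ne'
  have h_deriv := (hasDerivAt_add_smul_diagonal_update_sub (torusLap d L) (z • 1) (lam : ℂ) g w
    |>.inv_mul_mul_conjTranspose_inv_apply hH_unit A x y)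
  rwa [Function.update_eq_self] at h_deriv

/-- Derivative of `(R A R*)_{x y}` in a potential entry, and the resulting
gradient bound `∑_w |∂_{g_w}(RAR*)_{x y}|² ≤ 4λ²‖R‖²_{1→4}‖R‖²_{1→2}‖A‖²_{2→2}‖R‖²_{2→4}`. -/
theorem RAR_deriv_and_gradient_bound (d L : ℕ) [NeZero L]
    (lam : ℝ) (hlam : 0 < lam) (g : (Fin d → ZMod L) → ℝ) (z : ℂ) (hz : 0 < z.im)
    (A : Matrix (Fin d → ZMod L) (Fin d → ZMod L) ℂ) :
    let H : ((Fin d → ZMod L) → ℝ) → Matrix (Fin d → ZMod L) (Fin d → ZMod L) ℂ :=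
      fun gg => torusLap d L + (lam : ℂ) • Matrix.diagonal (fun i => ((gg i : ℝ) : ℂ))
        - z • (1 : Matrix (Fin d → ZMod L) (Fin d → ZMod L) ℂ)
    let R := (H g)⁻¹
    let T := R * A * Rᴴ
    (∀ w x y : Fin d → ZMod L,
      HasDerivAt
        (fun t : ℝ => (((H (Function.update g w t))⁻¹) * A * ((H (Function.update g w t))⁻¹)ᴴ) x y)
        (-(lam : ℂ) * (R x w * T w y + T x w * Rᴴ w y)) (g w)) ∧
    (∀ x y : Fin d → ZMod L,
      ∑ w : Fin d → ZMod L, ‖-(lam : ℂ) * (R x w * T w y + T x w * Rᴴ w y)‖ ^ 2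
        ≤ 4 * lam ^ 2 * opNormPQ 1 4 R ^ 2 * opNormPQ 1 2 R ^ 2
            * opNormPQ 2 2 A ^ 2 * opNormPQ 2 4 R ^ 2) :=
  RAR_deriv_and_gradient_bound_general d L lam g z hz A
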